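/- arXiv:math/0610681 — 8 statements merged into one kernel-verified Lean document; each statement's English description precedes it below -/
import Mathlib

section
/- Let β > 1 be a real number and let s = (s_n)_{n≥1} be a sequence with entries in {0, 1, ..., ⌊β⌋}. If s is the greedy β-expansion of 1 (i.e., obtained by the greedy algorithm), then for every k ≥ 1 the shifted sequence σ^k(s) is lexicographically strictly smaller than s. -/
/-- Remainders of the greedy β-expansion of 1: r₀ = 1, rₙ₊₁ = {β rₙ}. -/
noncomputable def greedyRem (β : ℝ) : ℕ → ℝ
  | 0 => 1
  | n + 1 => Int.fract (β * greedyRem β n)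

/-- Digits of the greedy β-expansion of 1 (indexed from 0, so `greedyDigit β n` is s_{n+1}). -/
noncomputable def greedyDigit (β : ℝ) (n : ℕ) : ℕ := ⌊β * greedyRem β n⌋₊

/-- Strict lexicographic order on sequences. -/
def lexLt (a b : ℕ → ℕ) : Prop := ∃ n, (∀ m, m < n → a m = b m) ∧ a n < b n

lemma greedyRem_nonneg (β : ℝ) : ∀ n, 0 ≤ greedyRem β n
  | 0 => by simp [greedyRem]
  | n + 1 => Int.fract_nonneg _

lemma greedyRem_le_one (β : ℝ) : ∀ n, greedyRem β n ≤ 1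
  | 0 => le_refl _
  | n + 1 => (Int.fract_lt_one _).le

lemma greedyRem_lt_one (β : ℝ) {n : ℕ} (hn : 1 ≤ n) : greedyRem β n < 1 := by
  cases n with
  | zero => omega
  | succ m => exact Int.fract_lt_one _

lemma greedyDigit_eq (β : ℝ) (hβ : 0 < β) (n : ℕ) :
    (greedyDigit β n : ℝ) = β * greedyRem β n - greedyRem β (n + 1) := by
  have h0 : (0:ℝ) ≤ β * greedyRem β n :=
    mul_nonneg hβ.le (greedyRem_nonneg β n)
  have : ((⌊β * greedyRem β n⌋₊ : ℤ) : ℝ) = ((⌊β * greedyRem β n⌋ : ℤ) : ℝ) := by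
    exact_mod_cast Int.natCast_floor_eq_floor h0
  simp only [greedyDigit, greedyRem, Int.fract]
  push_cast at this ⊢
  linarith [this]

lemma rem_diff (β : ℝ) (hβ : 0 < β) (k : ℕ) (n : ℕ)
    (h : ∀ m, m < n → greedyDigit β (m + k) = greedyDigit β m) :
    greedyRem β n - greedyRem β (n + k) = β ^ n * (1 - greedyRem β k) := by
  induction n with
  | zero => simp [greedyRem]
  | succ n ih =>
    have hd : greedyDigit β (n + k) = greedyDigit β n := h n (Nat.lt_succ_self n)
    have e1 := greedyDigit_eq β hβ n
    have e2 := greedyDigit_eq β hβ (n + k)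
    have ih' := ih (fun m hm => h m (hm.trans (Nat.lt_succ_self n)))
    have hcast : (greedyDigit β (n + k) : ℝ) = (greedyDigit β n : ℝ) := by
      exact_mod_cast hd
    have hnk : n + k + 1 = n + 1 + k := by ring
    rw [hnk] at e2
    have : greedyRem β (n + 1) - greedyRem β (n + 1 + k)
        = β * (greedyRem β n - greedyRem β (n + k)) := by
      rw [e1, e2] at *; linarith [hcast]
    rw [this, ih', pow_succ]; ring

/-- If s is the greedy β-expansion of 1 for β > 1, then every proper shift of s
is lexicographically strictly smaller than s. -/
theorem greedy_shift_lt (β : ℝ) (hβ : 1 < β) (k : ℕ) (hk : 1 ≤ k) :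
    lexLt (fun n => greedyDigit β (n + k)) (greedyDigit β) := by
  have hβ0 : 0 < β := lt_trans one_pos hβ
  have hrk : greedyRem β k < 1 := greedyRem_lt_one β hk
  have hpos : 0 < 1 - greedyRem β k := by linarith
  -- there is some n where digits differ
  have hexists : ∃ n, greedyDigit β (n + k) ≠ greedyDigit β n := by
    by_contra hall
    push_neg at hall
    obtain ⟨n, hn⟩ := pow_unbounded_of_one_lt (1 / (1 - greedyRem β k)) hβ
    have hd := rem_diff β hβ0 k n (fun m _ => hall m)
    have h1 : greedyRem β n - greedyRem β (n + k) ≤ 1 := by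
      linarith [greedyRem_le_one β n, greedyRem_nonneg β (n + k)]
    have h2 : 1 < β ^ n * (1 - greedyRem β k) := by
      rw [div_lt_iff₀ hpos] at hn
      linarith
    linarith [hd]
  classical
  let n := Nat.find hexists
  have hne : greedyDigit β (n + k) ≠ greedyDigit β n := Nat.find_spec hexists
  have hagree : ∀ m, m < n → greedyDigit β (m + k) = greedyDigit β m := by
    intro m hm
    by_contra hc
    exact absurd (Nat.find_le hc) (not_le.mpr hm)
  have hd := rem_diff β hβ0 k n hagree
  have hdiffpos : 0 < greedyRem β n - greedyRem β (n + k) := by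
    rw [hd]
    exact mul_pos (pow_pos hβ0 n) hpos
  have hle : greedyDigit β (n + k) ≤ greedyDigit β n := by
    apply Nat.floor_le_floor
    have := mul_le_mul_of_nonneg_left (by linarith : greedyRem β (n + k) ≤ greedyRem β n) hβ0.le
    exact this
  exact ⟨n, hagree, lt_of_le_of_ne hle hne⟩
end

section
/- Let s = (s_n)_{n≥1} be a binary sequence (entries in {0,1}). Suppose the supremum of lengths of blocks of consecutive 1's in s equals k and the supremum of lengths of blocks of consecutive 0's equals n (possibly infinite). If n > k, then s is not self-bracketed. -/
def shiftSeq (s : ℕ → ℕ) (k : ℕ) : ℕ → ℕ := fun n => s (n + k)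

def complSeq (s : ℕ → ℕ) : ℕ → ℕ := fun n => 1 - s n

def lexLe (a b : ℕ → ℕ) : Prop := lexLt a b ∨ a = b

/-- A binary sequence is self-bracketed if s̄ ≤ σᵏ(s) ≤ s lexicographically for all k ≥ 1. -/
def selfBracketed (s : ℕ → ℕ) : Prop :=
  ∀ k, 1 ≤ k → lexLe (complSeq s) (shiftSeq s k) ∧ lexLe (shiftSeq s k) s

/-- Supremum (in ℕ∞) of lengths of blocks of consecutive digits `d` in `s`. -/
noncomputable def runSup (s : ℕ → ℕ) (d : ℕ) : ℕ∞ :=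
  ⨆ L ∈ {L : ℕ | ∃ i, ∀ m, m < L → s (i + m) = d}, (L : ℕ∞)

/-- If the sup of lengths of 0-blocks exceeds the sup of lengths of 1-blocks,
then the binary sequence is not self-bracketed. -/
theorem not_selfBracketed_of_zeroRun_gt_oneRun (s : ℕ → ℕ) (hbin : ∀ m, s m ≤ 1)
    (k n : ℕ∞) (hk : runSup s 1 = k) (hn : runSup s 0 = n) (h : k < n) :
    ¬ selfBracketed s := by
  subst hk hn
  intro hself
  -- extract a zero-run longer than the one-run sup
  obtain ⟨L, ⟨i, hzero⟩, hLk⟩ :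
      ∃ L, (∃ i, ∀ m, m < L → s (i + m) = 0) ∧ runSup s 1 < (L : ℕ∞) := by
    by_contra hc
    push_neg at hc
    have hle : runSup s 0 ≤ runSup s 1 := by
      apply iSup₂_le
      intro L hL
      exact hc L hL
    exact absurd h (not_lt.mpr hle)
  -- no one-run of length L
  have hno : ∀ j, ¬ (∀ m, m < L → s (j + m) = 1) := by
    intro j hones
    have : (L : ℕ∞) ≤ runSup s 1 :=
      le_iSup₂ (f := fun (L : ℕ) (_ : L ∈ {L : ℕ | ∃ i, ∀ m, m < L → s (i + m) = 1}) =>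
        (L : ℕ∞)) L ⟨j, hones⟩
    exact absurd (lt_of_lt_of_le hLk this) (lt_irrefl _)
  have hL1 : 1 ≤ L := by
    by_contra hL0
    push_neg at hL0
    interval_cases L
    · exact absurd hLk (by simp [runSup])
  rcases Nat.eq_zero_or_pos i with hi | hi
  · -- zero run starts at 0
    subst hi
    have hs0 : s 0 = 0 := by simpa using hzero 0 hL1
    have hs1 : s 1 = 0 := by
      rcases lt_or_ge 1 L with hL2 | hL2
      · simpa using hzero 1 hL2
      · -- L = 1, so no one-run of length 1, i.e. s j ≠ 1 for all j
        have := hno 1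
        have h1 : ¬ (s 1 = 1) := by
          intro hs
          apply this
          intro m hm
          interval_cases L
          interval_cases m
          simpa using hs
        have := hbin 1
        omega
    have := (hself 1 le_rfl).1
    rcases this with ⟨n₀, hagree, hlt⟩ | heq
    · rcases Nat.eq_zero_or_pos n₀ with hn0 | hn0
      · subst hn0
        simp [complSeq, shiftSeq, hs0, hs1] at hlt
      · have := hagree 0 hn0
        simp [complSeq, shiftSeq, hs0, hs1] at this
    · have := congrFun heq 0
      simp [complSeq, shiftSeq, hs0, hs1] at this
  · -- zero run starts at i ≥ 1 : s̄ ≤ σⁱ(s) forces s to begin with L ones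
    have hshift : ∀ m, m < L → shiftSeq s i m = 0 := by
      intro m hm
      simp only [shiftSeq]
      rw [Nat.add_comm]
      exact hzero m hm
    apply hno 0
    intro m hm
    simp only [Nat.zero_add]
    have hle := (hself i hi).1
    rcases hle with ⟨n₀, hagree, hlt⟩ | heq
    · have hLn : L ≤ n₀ := by
        by_contra hc
        push_neg at hc
        have := hshift n₀ hc
        omega
      have := hagree m (lt_of_lt_of_le hm hLn)
      have h2 := hshift m hm
      simp only [complSeq] at this
      have := hbin m
      omega
    · have := congrFun heq m
      have h2 := hshift m hm
      simp only [complSeq] at this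
      have := hbin m
      omega
end

section
/- If a binary sequence b is self-bracketed and begins with u followed by the complement ū of u, where u is a finite nonempty binary word, then b equals the periodic sequence (u ū)^∞. -/
lemma not_lexLe_of (a c : ℕ → ℕ) (j : ℕ) (hagree : ∀ m, m < j → a m = c m)
    (hgt : c j < a j) : ¬ lexLe a c := by
  rintro (⟨i, hag, hlt⟩ | heq)
  · rcases lt_trichotomy i j with h | h | h
    · have := hagree i h; omega
    · subst h; omega
    · have := hag j h; omega
  · rw [heq] at hgt; omega

/-- If a self-bracketed binary sequence begins with u followed by ū (u a nonempty
finite binary word), then it equals the periodic sequence (uū)^∞. -/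
theorem selfBracketed_prefix_u_ubar (b : ℕ → ℕ) (hbin : ∀ m, b m ≤ 1)
    (hsb : selfBracketed b) (u : List ℕ) (hu : u ≠ []) (hubin : ∀ x ∈ u, x ≤ 1)
    (hpre : ∀ i, i < u.length → b i = u.getD i 0)
    (hpre' : ∀ i, i < u.length → b (u.length + i) = 1 - u.getD i 0) :
    ∀ n, b n = (u ++ u.map (fun x => 1 - x)).getD (n % (2 * u.length)) 0 := by
  have hL : 0 < u.length := List.length_pos_iff.mpr hu
  set L := u.length with hLdef
  set w := u ++ u.map (fun x => 1 - x) with hwdef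
  set P : ℕ → ℕ := fun m => w.getD (m % (2 * L)) 0 with hPdef
  have hugetD : ∀ i, i < L → u.getD i 0 ≤ 1 := by
    intro i hi
    rw [List.getD_eq_getElem u 0 hi]
    exact hubin _ (List.getElem_mem hi)
  have hwget_lo : ∀ i, i < L → w.getD i 0 = u.getD i 0 := by
    intro i hi
    rw [hwdef, List.getD_append _ _ _ _ hi]
  have hwget_hi : ∀ i, i < L → w.getD (L + i) 0 = 1 - u.getD i 0 := by
    intro i hi
    rw [hwdef, List.getD_append_right _ _ _ _ (by omega : u.length ≤ L + i)]
    have h2 : L + i - u.length = i := by omega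
    rw [h2]
    rcases lt_or_ge i (u.map (fun x => 1 - x)).length with h | h
    · rw [List.getD_eq_getElem _ 0 h, List.getD_eq_getElem u 0 hi]
      simp
    · simp at h; omega
  have hwbin : ∀ i, w.getD i 0 ≤ 1 := by
    intro i
    rcases lt_or_ge i L with h | h
    · rw [hwget_lo i h]; exact hugetD i h
    · rcases lt_or_ge i (2*L) with h2 | h2
      · have : i = L + (i - L) := by omega
        rw [this, hwget_hi _ (by omega)]; omega
      · rw [List.getD_eq_default]
        · omega
        · rw [hwdef]; simp; omega
  have hPbin : ∀ m, P m ≤ 1 := fun m => hwbin _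
  have hPflip : ∀ m, P (m + L) = 1 - P m := by
    intro m
    have hs : m % (2*L) < 2*L := Nat.mod_lt _ (by omega)
    have e1 : (m + L) % (2*L) = (m % (2*L) + L) % (2*L) := by
      conv_lhs => rw [Nat.add_mod, Nat.mod_eq_of_lt (show L < 2*L by omega)]
    show w.getD ((m + L) % (2*L)) 0 = 1 - w.getD (m % (2*L)) 0
    rw [e1]
    set s := m % (2*L) with hsdef
    rcases lt_or_ge s L with h | h
    · rw [Nat.mod_eq_of_lt (by omega : s + L < 2*L), Nat.add_comm s L,
        hwget_hi s h, hwget_lo s h]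
    · set t := s - L with htdef
      have ht : t < L := by omega
      have e2 : s + L = t + 2*L := by omega
      have e3 : (s + L) % (2*L) = t := by
        rw [e2, show t + 2*L = t + (2*L)*1 from by ring, Nat.add_mul_mod_self_left,
          Nat.mod_eq_of_lt (by omega : t < 2*L)]
      rw [e3]
      have e4 : s = L + t := by omega
      rw [e4, hwget_hi t ht, hwget_lo t ht]
      have := hugetD t ht
      omega
  have base : ∀ m, m < 2*L → b m = P m := by
    intro m hm
    show b m = w.getD (m % (2*L)) 0
    rw [Nat.mod_eq_of_lt hm]
    rcases lt_or_ge m L with h | h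
    · rw [hwget_lo m h]; exact hpre m h
    · have e : m = L + (m - L) := by omega
      rw [e, hwget_hi _ (by omega)]
      exact hpre' _ (by omega)
  intro n
  induction n using Nat.strong_induction_on with
  | _ n ih =>
    show b n = P n
    have ih' : ∀ m, m < n → b m = P m := fun m hm => ih m hm
    by_cases hn2 : n < 2*L
    · exact base n hn2
    push_neg at hn2
    by_contra hne
    obtain ⟨q, r, hq0, hr2, hrmod⟩ : ∃ q r, 2*L*q + r = n ∧ r < 2*L ∧ r = n % (2*L) :=
      ⟨n / (2*L), n % (2*L), Nat.div_add_mod n (2*L), Nat.mod_lt n (by omega), rfl⟩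
    have hq1 : 1 ≤ q := by
      rcases Nat.eq_zero_or_pos q with h | h
      · subst h; simp at hq0; omega
      · exact h
    have hmul : 2*L ≤ 2*L*q := by
      calc 2*L = 2*L*1 := by ring
      _ ≤ 2*L*q := Nat.mul_le_mul_left _ hq1
    have hk2 : 2*L ≤ n - r := by omega
    have hrn : r < n := by omega
    have hbr : b r = P n := by
      rw [ih' r hrn]
      show w.getD (r % (2*L)) 0 = w.getD (n % (2*L)) 0
      rw [Nat.mod_eq_of_lt hr2, hrmod]
    have hPmodk : ∀ m j, (m + (2*L)*j) % (2*L) = m % (2*L) := fun m j =>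
      Nat.add_mul_mod_self_left m (2*L) j
    have hb1 := hbin n
    have hP1 := hPbin n
    rcases (by omega : (b n = 1 ∧ P n = 0) ∨ (b n = 0 ∧ P n = 1)) with ⟨h1, h0⟩ | ⟨h0, h1⟩
    · -- b n = 1 > 0 = P n : contradict shift^(n-r) b ≤ b
      refine not_lexLe_of (shiftSeq b (n - r)) b r ?_ ?_ (hsb (n - r) (by omega)).2
      · intro m hm
        show b (m + (n - r)) = b m
        rw [ih' _ (by omega), ih' _ (by omega)]
        show w.getD ((m + (n - r)) % (2*L)) 0 = w.getD (m % (2*L)) 0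
        rw [show m + (n - r) = m + 2*L*q by omega, hPmodk]
      · show b r < b (r + (n - r))
        rw [show r + (n - r) = n by omega, h1, hbr, h0]
        omega
    · -- b n = 0 < 1 = P n : contradict compl b ≤ shift^(k') b
      have key : ∀ k', 1 ≤ k' → k' ≤ n →
          (∀ m : ℕ, (m + k') % (2*L) = (m + L) % (2*L)) → False := by
        intro k' hk'1 hk'n hmod
        refine not_lexLe_of (complSeq b) (shiftSeq b k') (n - k') ?_ ?_ (hsb k' hk'1).1
        · intro m hm
          show 1 - b m = b (m + k')
          rw [ih' _ (by omega), ih' _ (by omega : m + k' < n)]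
          show 1 - P m = w.getD ((m + k') % (2*L)) 0
          rw [hmod m]
          exact (hPflip m).symm
        · show b ((n - k') + k') < 1 - b (n - k')
          rw [show (n - k') + k' = n by omega, h0, ih' _ (by omega : n - k' < n)]
          have h2 : P ((n - k') + L) = 1 - P (n - k') := hPflip _
          have h3 : P ((n - k') + k') = P ((n - k') + L) := by
            show w.getD _ 0 = w.getD _ 0
            rw [hmod]
          rw [show (n - k') + k' = n by omega] at h3
          have h4 := hPbin (n - k')
          have h5 : P (n - k') = 0 := by omega
          show 0 < 1 - P (n - k')
          omega
      rcases le_or_gt L r with hrL | hrL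
      · refine key ((n - r) + L) (by omega) (by omega) ?_
        intro m
        rw [show m + ((n - r) + L) = (m + L) + 2*L*q by omega]
        exact hPmodk (m + L) q
      · refine key ((n - r) - L) (by omega) (by omega) ?_
        intro m
        have e : m + ((n - r) - L) = (m + L) + 2*L*(q - 1) := by
          have h5 : 2*L*(q-1) + 2*L = 2*L*q := by
            cases q with
            | zero => omega
            | succ q' => simp only [Nat.succ_sub_one]; ring
          omega
        rw [e]
        exact hPmodk (m + L) (q - 1)
end

section
/- Let a = (w0)^∞ be a periodic binary sequence of minimal period 1 + |w|, where the finite word w begins with 1, and let b = w10^∞. Then the following are equivalent: (i) σ^k(a) ≤_lex a for all k ≥ 1; (ii) σ^k(b) <_lex b for all k ≥ 1. -/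
/-- The periodic sequence a = (w0)^∞. -/
def aSeq (w : List ℕ) : ℕ → ℕ := fun n => (w ++ [0]).getD (n % (w.length + 1)) 0

/-- The sequence b = w10^∞. -/
def bSeq (w : List ℕ) : ℕ → ℕ := fun n =>
  if n < w.length then w.getD n 0 else if n = w.length then 1 else 0

private lemma lexLt_asymm {x y : ℕ → ℕ} (h1 : lexLt x y) (h2 : lexLt y x) : False := by
  obtain ⟨n1, e1, l1⟩ := h1
  obtain ⟨n2, e2, l2⟩ := h2
  rcases lt_trichotomy n1 n2 with h | h | h
  · have := e2 n1 h; omega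
  · subst h; omega
  · have := e1 n2 h; omega

private lemma aSeq_lt {w : List ℕ} {n : ℕ} (h : n < w.length) :
    aSeq w n = w.getD n 0 := by
  unfold aSeq
  rw [Nat.mod_eq_of_lt (by omega), List.getD_append _ _ _ _ h]

private lemma aSeq_len (w : List ℕ) : aSeq w w.length = 0 := by
  unfold aSeq
  rw [Nat.mod_eq_of_lt (by omega), List.getD_append_right _ _ _ _ (le_refl _)]
  simp

private lemma aSeq_le_one {w : List ℕ} (hbin : ∀ x ∈ w, x ≤ 1) (n : ℕ) :
    aSeq w n ≤ 1 := by
  unfold aSeq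
  set i := n % (w.length + 1) with hi
  by_cases h : i < (w ++ [0]).length
  · rw [List.getD_eq_getElem _ _ h]
    have hm : (w ++ [0])[i] ∈ w ++ [0] := List.getElem_mem h
    rcases List.mem_append.mp hm with h' | h'
    · exact hbin _ h'
    · simp at h'; omega
  · rw [List.getD_eq_default _ _ (by omega)]
    omega

private lemma aSeq_period (w : List ℕ) (n : ℕ) :
    aSeq w (n + (w.length + 1)) = aSeq w n := by
  unfold aSeq
  rw [Nat.add_mod_right]

private lemma aSeq_period_mul (w : List ℕ) (n q : ℕ) :
    aSeq w (n + q * (w.length + 1)) = aSeq w n := by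
  induction q with
  | zero => simp
  | succ q ih =>
      have : n + (q + 1) * (w.length + 1) = (n + q * (w.length + 1)) + (w.length + 1) := by ring
      rw [this, aSeq_period, ih]

/-- If a shift agrees with `aSeq w` on one full period, it agrees everywhere. -/
private lemma aSeq_agree_all {w : List ℕ} {r : ℕ}
    (h : ∀ m < w.length + 1, aSeq w (m + r) = aSeq w m) :
    ∀ n, aSeq w (n + r) = aSeq w n := by
  intro n
  induction n using Nat.strong_induction_on with
  | _ n ih =>
    by_cases hn : n < w.length + 1
    · exact h n hn
    · have hn' : n = (n - (w.length + 1)) + (w.length + 1) := by omega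
      rw [hn']
      have : n - (w.length + 1) + (w.length + 1) + r
          = (n - (w.length + 1) + r) + (w.length + 1) := by ring
      rw [this, aSeq_period, aSeq_period, ih _ (by omega)]

private lemma bSeq_lt {w : List ℕ} {n : ℕ} (h : n < w.length) :
    bSeq w n = w.getD n 0 := by
  unfold bSeq; rw [if_pos h]

private lemma bSeq_len (w : List ℕ) : bSeq w w.length = 1 := by
  unfold bSeq; rw [if_neg (by omega), if_pos rfl]

private lemma bSeq_gt {w : List ℕ} {n : ℕ} (h : w.length < n) :
    bSeq w n = 0 := by
  unfold bSeq; rw [if_neg (by omega), if_neg (by omega)]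

/-- For a = (w0)^∞ of minimal period 1+|w| with w beginning in 1, and b = w10^∞:
(∀ k ≥ 1, σᵏ(a) ≤_lex a) iff (∀ k ≥ 1, σᵏ(b) <_lex b). -/
theorem shift_le_iff_shift_lt (w : List ℕ) (hw : w ≠ []) (hbin : ∀ x ∈ w, x ≤ 1)
    (hone : w.getD 0 0 = 1)
    (hmin : ∀ T, 1 ≤ T → T ≤ w.length → ∃ n, aSeq w (n + T) ≠ aSeq w n) :
    (∀ k, 1 ≤ k → lexLe (shiftSeq (aSeq w) k) (aSeq w)) ↔
      (∀ k, 1 ≤ k → lexLt (shiftSeq (bSeq w) k) (bSeq w)) := by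
  have hL : 0 < w.length := List.length_pos_iff.mpr hw
  set L := w.length with hLdef
  have hb0 : bSeq w 0 = 1 := by rw [bSeq_lt hL]; exact hone
  constructor
  · -- (i) → (ii)
    intro hi k hk
    by_cases hkL : L < k
    · -- k > L : shift is all zeros
      refine ⟨0, fun m hm => absurd hm (by omega), ?_⟩
      show bSeq w (0 + k) < bSeq w 0
      rw [hb0, Nat.zero_add, bSeq_gt hkL]
      omega
    · push_neg at hkL
      -- 1 ≤ k ≤ L
      have hne : shiftSeq (aSeq w) k ≠ aSeq w := by
        intro he
        obtain ⟨n, hn⟩ := hmin k hk hkL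
        exact hn (congrFun he n)
      have hlt : lexLt (shiftSeq (aSeq w) k) (aSeq w) := by
        rcases hi k hk with h | h
        · exact h
        · exact absurd h hne
      obtain ⟨j, hagree, hjlt⟩ := hlt
      simp only [shiftSeq] at hagree hjlt
      have haj1 : aSeq w j = 1 := by
        have := aSeq_le_one hbin j
        omega
      have hajk0 : aSeq w (j + k) = 0 := by omega
      have hjp : j < L + 1 := by
        by_contra hjp
        push_neg at hjp
        have hall := aSeq_agree_all (w := w) (r := k)
          (fun m hm => hagree m (by omega))
        rw [hall j] at hjlt
        omega
      have hjL : j < L := by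
        rcases lt_or_eq_of_le (Nat.lt_succ_iff.mp hjp) with h | h
        · exact h
        · rw [h, aSeq_len] at haj1; omega
      set d := L - k with hd
      rcases lt_trichotomy j d with hjd | hjd | hjd
      · -- j < d : direct witness j
        refine ⟨j, fun m hm => ?_, ?_⟩
        · show bSeq w (m + k) = bSeq w m
          rw [bSeq_lt (show m + k < L by omega), bSeq_lt (show m < L by omega),
            ← aSeq_lt (show m + k < L by omega), ← aSeq_lt (show m < L by omega)]
          exact hagree m hm
        · show bSeq w (j + k) < bSeq w j
          rw [bSeq_lt (show j + k < L by omega), bSeq_lt hjL,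
            ← aSeq_lt (show j + k < L by omega), ← aSeq_lt hjL]
          omega
      · -- j = d : j + k = L, tie at j; win at first later nonzero of b
        have hjk : j + k = L := by omega
        have hex : ∃ n, j < n ∧ bSeq w n ≠ 0 := ⟨L, by omega, by rw [bSeq_len]; omega⟩
        classical
        obtain ⟨hn0j, hn0ne⟩ := Nat.find_spec hex
        refine ⟨Nat.find hex, fun m hm => ?_, ?_⟩
        · show bSeq w (m + k) = bSeq w m
          rcases lt_trichotomy m j with hmj | hmj | hmj
          · rw [bSeq_lt (show m + k < L by omega), bSeq_lt (show m < L by omega),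
              ← aSeq_lt (show m + k < L by omega), ← aSeq_lt (show m < L by omega)]
            exact hagree m hmj
          · subst hmj
            rw [show m + k = L from hjk, bSeq_len, bSeq_lt hjL, ← aSeq_lt hjL, haj1]
          · have hm0 : bSeq w m = 0 := by
              have := Nat.find_min hex hm
              push_neg at this
              exact this hmj
            rw [hm0, bSeq_gt (show L < m + k by omega)]
        · show bSeq w (Nat.find hex + k) < bSeq w (Nat.find hex)
          rw [bSeq_gt (show L < Nat.find hex + k by omega)]
          exact Nat.pos_of_ne_zero hn0ne
      · -- j > d : contradiction with (i) for shift d+1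
        exfalso
        have hd1 : 1 ≤ d + 1 := by omega
        have hd1L : d + 1 ≤ L := by omega
        have hne' : shiftSeq (aSeq w) (d + 1) ≠ aSeq w := by
          intro he
          obtain ⟨n, hn⟩ := hmin (d + 1) hd1 hd1L
          exact hn (congrFun he n)
        have hlt' : lexLt (shiftSeq (aSeq w) (d + 1)) (aSeq w) := by
          rcases hi (d + 1) hd1 with h | h
          · exact h
          · exact absurd h hne'
        refine lexLt_asymm hlt' ⟨j - (d + 1), fun i hi' => ?_, ?_⟩
        · -- aSeq w i = aSeq w (i + (d+1))  [as shiftSeq at i]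
          show aSeq w i = aSeq w (i + (d + 1))
          have h1 : aSeq w ((d + 1 + i) + k) = aSeq w (d + 1 + i) :=
            hagree (d + 1 + i) (by omega)
          have h2 : (d + 1 + i) + k = i + (L + 1) := by omega
          rw [h2, aSeq_period] at h1
          rw [show i + (d + 1) = d + 1 + i by omega]
          exact h1
        · show aSeq w (j - (d + 1)) < aSeq w ((j - (d + 1)) + (d + 1))
          have h2 : j + k = (j - (d + 1)) + (L + 1) := by omega
          rw [h2, aSeq_period] at hajk0
          have h3 : (j - (d + 1)) + (d + 1) = j := by omega
          rw [h3, hajk0, haj1]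
          omega
  · -- (ii) → (i)
    intro hii k hk
    set r := k % (L + 1) with hr
    have hrlt : r < L + 1 := Nat.mod_lt _ (by omega)
    have hshift : shiftSeq (aSeq w) k = shiftSeq (aSeq w) r := by
      funext n
      show aSeq w (n + k) = aSeq w (n + r)
      have hdm := Nat.div_add_mod k (L + 1)
      have hc : (L + 1) * (k / (L + 1)) = (k / (L + 1)) * (L + 1) := Nat.mul_comm _ _
      have : n + k = (n + r) + (k / (L + 1)) * (L + 1) := by omega
      rw [this, aSeq_period_mul]
    by_cases hr0 : r = 0
    · right
      rw [hshift, hr0]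
      funext n
      show aSeq w (n + 0) = aSeq w n
      rw [Nat.add_zero]
    · have hr1 : 1 ≤ r := by omega
      have hrL : r ≤ L := by omega
      rw [hshift]
      left
      classical
      have hex : ∃ n, aSeq w (n + r) ≠ aSeq w n := hmin r hr1 hrL
      set j := Nat.find hex with hj
      have hjne : aSeq w (j + r) ≠ aSeq w j := Nat.find_spec hex
      have hagree : ∀ m < j, aSeq w (m + r) = aSeq w m := by
        intro m hm
        have := Nat.find_min hex hm
        push_neg at this
        exact this
      rcases lt_or_gt_of_ne hjne with h | h
      · exact ⟨j, fun m hm => hagree m hm, h⟩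
      · -- bad case: aSeq w (j+r) > aSeq w j, derive False
        exfalso
        have haj0 : aSeq w j = 0 := by
          have h1 := aSeq_le_one hbin j
          have h2 := aSeq_le_one hbin (j + r)
          omega
        have hajr1 : aSeq w (j + r) = 1 := by
          have h2 := aSeq_le_one hbin (j + r)
          omega
        have hjp : j < L + 1 := by
          by_contra hjp
          push_neg at hjp
          have hall := aSeq_agree_all (w := w) (r := r)
            (fun m hm => hagree m (by omega))
          exact hjne (hall j)
        set d := L - r with hd
        have hbr := hii r hr1
        rcases lt_trichotomy j d with hjd | hjd | hjd
        · -- j < d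
          refine lexLt_asymm hbr ⟨j, fun m hm => ?_, ?_⟩
          · show bSeq w m = bSeq w (m + r)
            rw [bSeq_lt (show m + r < L by omega), bSeq_lt (show m < L by omega),
              ← aSeq_lt (show m + r < L by omega), ← aSeq_lt (show m < L by omega)]
            exact (hagree m hm).symm
          · show bSeq w j < bSeq w (j + r)
            rw [bSeq_lt (show j + r < L by omega), bSeq_lt (show j < L by omega),
              ← aSeq_lt (show j + r < L by omega), ← aSeq_lt (show j < L by omega)]
            omega
        · -- j = d : j + r = L, contradiction with aSeq w (j+r) = 1
          have : j + r = L := by omega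
          rw [this, aSeq_len] at hajr1
          omega
        · -- j > d
          refine lexLt_asymm hbr ⟨d, fun m hm => ?_, ?_⟩
          · show bSeq w m = bSeq w (m + r)
            rw [bSeq_lt (show m + r < L by omega), bSeq_lt (show m < L by omega),
              ← aSeq_lt (show m + r < L by omega), ← aSeq_lt (show m < L by omega)]
            exact (hagree m (by omega)).symm
          · show bSeq w d < bSeq w (d + r)
            have hdr : d + r = L := by omega
            rw [hdr, bSeq_len, bSeq_lt (show d < L by omega), ← aSeq_lt (show d < L by omega)]
            have := hagree d hjd
            rw [hdr, aSeq_len] at this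
            omega
end

section
/- The polynomial x^4 − x^3 − 2x^2 + 1 has a unique root χ in the interval (1, 2), χ ≈ 1.9052, and all other complex roots of this polynomial have modulus strictly less than 1; hence χ is a Pisot number. -/
/-!
The real roots `a ≈ 1.905` and `b ≈ 0.67` are located by the intermediate value theorem.
Dividing them out leaves the real quadratic `z ^ 2 + (a + b - 1) * z + q` with `a * b * q = 1`,
so `q < 1`, and its discriminant is negative; its roots are therefore complex conjugates `w, w̄`
with `‖w‖ ^ 2 = w * w̄ = q < 1`.
-/

open Set ComplexConjugate

def chiPoly {R : Type*} [CommRing R] (x : R) : R := x ^ 4 - x ^ 3 - 2 * x ^ 2 + 1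

@[simp, norm_cast]
theorem Complex.ofReal_chiPoly (x : ℝ) : ((chiPoly x : ℝ) : ℂ) = chiPoly (x : ℂ) := by
  simp [chiPoly]

theorem chiPoly_eq_mul_of_roots {R : Type*} [CommRing R] [IsDomain R] {a b : R} (hab : a ≠ b)
    (ha : chiPoly a = 0) (hb : chiPoly b = 0) (z : R) :
    chiPoly z = (z - a) * (z - b) *
      (z ^ 2 + (a + b - 1) * z + ((a + b) ^ 2 - (a + b) - a * b - 2)) := by
  unfold chiPoly at *
  have hab' : a - b ≠ 0 := sub_ne_zero.2 hab
  have hlin : (a + b) * ((a + b) ^ 2 - (a + b) - a * b - 2) = a * b * (a + b - 1) :=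
    mul_left_cancel₀ hab' (by linear_combination ha - hb)
  have hconst : a * b * ((a + b) ^ 2 - (a + b) - a * b - 2) = 1 :=
    mul_left_cancel₀ hab' (by linear_combination b * ha - a * hb)
  linear_combination z * hlin - hconst

theorem exists_chiPoly_eq_zero_mem_Icc {l u : ℝ} (hlu : l ≤ u)
    (hsign : 0 ∈ uIcc (chiPoly l) (chiPoly u)) : ∃ x ∈ Icc l u, chiPoly x = 0 := by
  rw [← uIcc_of_le hlu]
  exact intermediate_value_uIcc (by unfold chiPoly; fun_prop) hsign

theorem eq_of_chiPoly_eq_zero {a y : ℝ} (ha : a ∈ Icc 1.90 1.91) (hy : y ∈ Ioo 1 2)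
    (ha0 : chiPoly a = 0) (hy0 : chiPoly y = 0) : y = a := by
  obtain ⟨ha₁, ha₂⟩ := ha
  obtain ⟨hy₁, hy₂⟩ := hy
  set h := y ^ 3 + y ^ 2 * a + y * a ^ 2 + a ^ 3 - y ^ 2 - y * a - a ^ 2 - 2 * y - 2 * a
    with hh
  have hpos : 0 < h := by nlinarith [hh]
  have hfac : (y - a) * h = 0 := by
    unfold chiPoly at *
    linear_combination hy0 - ha0
  exact sub_eq_zero.1 ((mul_eq_zero.1 hfac).resolve_right hpos.ne')

theorem Complex.normSq_eq_of_sq_add_mul_add_eq_zero {p q : ℝ} (hdisc : p ^ 2 < 4 * q) {z : ℂ}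
    (hz : z ^ 2 + p * z + q = 0) : normSq z = q := by
  have hz' : conj z ^ 2 + p * conj z + q = 0 := by simpa using congrArg conj hz
  have hnotreal : z - conj z ≠ 0 := by
    rw [sub_ne_zero, ne_comm, Ne, conj_eq_iff_re]
    intro hre
    rw [← hre] at hz
    have : z.re ^ 2 + p * z.re + q = 0 := by exact_mod_cast hz
    nlinarith [sq_nonneg (2 * z.re + p)]
  have hsum : z + conj z + p = 0 :=
    mul_left_cancel₀ hnotreal (by linear_combination hz - hz')
  have hnormSq : (normSq z : ℂ) = q := by
    rw [← mul_conj]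
    linear_combination z * hsum - hz
  exact_mod_cast hnormSq

/-- x⁴ − x³ − 2x² + 1 has a unique root χ in (1,2) and all other complex roots
have modulus < 1; hence χ is a Pisot number. -/
theorem chi_pisot :
    ∃ χ : ℝ, 1 < χ ∧ χ < 2 ∧ χ ^ 4 - χ ^ 3 - 2 * χ ^ 2 + 1 = 0 ∧
      (∀ y : ℝ, 1 < y → y < 2 → y ^ 4 - y ^ 3 - 2 * y ^ 2 + 1 = 0 → y = χ) ∧
      (∀ z : ℂ, z ^ 4 - z ^ 3 - 2 * z ^ 2 + 1 = 0 → z ≠ (χ : ℂ) →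
        ‖z‖ < 1) := by
  obtain ⟨a, ha, ha0⟩ := exists_chiPoly_eq_zero_mem_Icc (l := 1.90) (u := 1.91) (by norm_num)
    (by rw [mem_uIcc]; norm_num [chiPoly])
  obtain ⟨b, hb, hb0⟩ := exists_chiPoly_eq_zero_mem_Icc (l := 0.66) (u := 0.68) (by norm_num)
    (by rw [mem_uIcc]; norm_num [chiPoly])
  have ⟨ha₁, ha₂⟩ := ha
  have ⟨hb₁, hb₂⟩ := hb
  have hab : a ≠ b := ne_of_gt (by linarith)
  set q := (a + b) ^ 2 - (a + b) - a * b - 2 with hq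
  have hqab : a * b * q = 1 := by
    simpa [chiPoly] using (chiPoly_eq_mul_of_roots hab ha0 hb0 0).symm
  have hq1 : q < 1 := by nlinarith
  have hdisc : (a + b - 1) ^ 2 < 4 * q := by nlinarith
  refine ⟨a, by linarith, by linarith, ha0,
    fun y hy₁ hy₂ hy0 => eq_of_chiPoly_eq_zero ha ⟨hy₁, hy₂⟩ ha0 hy0, fun z hz hza => ?_⟩
  have hfac := chiPoly_eq_mul_of_roots (by exact_mod_cast hab)
    (by exact_mod_cast ha0 : chiPoly (a : ℂ) = 0) (by exact_mod_cast hb0 : chiPoly (b : ℂ) = 0) z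
  rw [show chiPoly z = 0 from hz] at hfac
  rcases mul_eq_zero.1 hfac.symm with hlin | hquad
  · rcases mul_eq_zero.1 hlin with hza' | hzb
    · exact absurd (sub_eq_zero.1 hza') hza
    · rw [sub_eq_zero.1 hzb, Complex.norm_real, Real.norm_eq_abs, abs_of_pos (by linarith)]
      linarith
  · have hnormSq := Complex.normSq_eq_of_sq_add_mul_add_eq_zero hdisc (z := z)
      (by rw [hq]; push_cast; exact hquad)
    rw [← sq_lt_one_iff₀ (norm_nonneg z), Complex.sq_norm, hnormSq]
    exact hq1
end

section
/- The binary sequence s = 11(10)^∞ = 1,1,1,0,1,0,1,0,... is strictly self-bracketed: for every k ≥ 1, s̄ <_lex σ^k(s) <_lex s. Consequently the root χ of x^4 − x^3 − 2x^2 + 1 in (1,2) is univoque. -/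
/-- The sequence 11(10)^∞ = 1,1,1,0,1,0,1,0,… (indexed from 0). -/
def chiSeq : ℕ → ℕ := fun n => if n ≤ 1 then 1 else if n % 2 = 0 then 1 else 0


lemma chiSeq_even {n : ℕ} (h : n % 2 = 0) : chiSeq n = 1 := by
  unfold chiSeq; split <;> simp [h]

lemma chiSeq_odd {n : ℕ} (h2 : 2 ≤ n) (h : n % 2 = 1) : chiSeq n = 0 := by
  unfold chiSeq
  rw [if_neg (by omega), h]
  norm_num

lemma chiSeq_le_one (n : ℕ) : chiSeq n ≤ 1 := by
  unfold chiSeq; split; · exact le_refl 1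
  split <;> omega

lemma part1 : ∀ k, 1 ≤ k → lexLt (complSeq chiSeq) (shiftSeq chiSeq k) ∧
    lexLt (shiftSeq chiSeq k) chiSeq := by
  intro k hk
  have c0 : complSeq chiSeq 0 = 0 := rfl
  have c1 : complSeq chiSeq 1 = 0 := rfl
  constructor
  · -- compl < shift
    rcases Nat.even_or_odd k with ⟨j, hj⟩ | ⟨j, hj⟩
    · refine ⟨0, fun m hm => absurd hm (Nat.not_lt_zero m), ?_⟩
      rw [c0]
      show 0 < chiSeq (0 + k)
      rw [chiSeq_even (by omega)]
      norm_num
    · rcases eq_or_lt_of_le hk with h1 | h1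
      · refine ⟨0, fun m hm => absurd hm (Nat.not_lt_zero m), ?_⟩
        rw [c0]
        show 0 < chiSeq (0 + k)
        rw [← h1]
        decide
      · obtain rfl : k = 2 * j + 1 := by omega
        refine ⟨1, ?_, ?_⟩
        · intro m hm
          interval_cases m
          rw [c0]
          show 0 = chiSeq (0 + (2 * j + 1))
          rw [chiSeq_odd (by omega) (by omega)]
        · rw [c1]
          show 0 < chiSeq (1 + (2 * j + 1))
          rw [chiSeq_even (by omega)]
          norm_num
  · -- shift < chiSeq
    rcases Nat.even_or_odd k with ⟨j, hj⟩ | ⟨j, hj⟩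
    · obtain rfl : k = 2 * j := by omega
      refine ⟨1, ?_, ?_⟩
      · intro m hm
        interval_cases m
        show chiSeq (0 + 2 * j) = chiSeq 0
        rw [chiSeq_even (by omega)]; rfl
      · show chiSeq (1 + 2 * j) < chiSeq 1
        rw [chiSeq_odd (by omega) (by omega)]
        decide
    · rcases eq_or_lt_of_le hk with h1 | h1
      · refine ⟨2, ?_, ?_⟩
        · intro m hm
          interval_cases m <;> (show chiSeq (_ + k) = _) <;> rw [← h1] <;> rfl
        · show chiSeq (2 + k) < chiSeq 2
          rw [← h1]; decide
      · obtain rfl : k = 2 * j + 1 := by omega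
        refine ⟨0, fun m hm => absurd hm (Nat.not_lt_zero m), ?_⟩
        show chiSeq (0 + (2 * j + 1)) < chiSeq 0
        rw [chiSeq_odd (by omega) (by omega)]
        decide


lemma chiSeq_even' {n : ℕ} (h : n % 2 = 0) : chiSeq n = 1 := by
  unfold chiSeq; split <;> simp [h]
lemma chiSeq_odd' {n : ℕ} (h2 : 2 ≤ n) (h : n % 2 = 1) : chiSeq n = 0 := by
  unfold chiSeq; rw [if_neg (by omega), h]; norm_num
lemma chiSeq_le_one' (n : ℕ) : chiSeq n ≤ 1 := by
  unfold chiSeq; split; · exact le_refl 1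
  split <;> omega

section
variable {χ : ℝ}

lemma exist_aux (h1 : 1 < χ) (h2 : χ < 2) (h188 : (1.88:ℝ) < χ)
    (hrel : χ ^ 4 - χ ^ 3 - 2 * χ ^ 2 + 1 = 0) :
    ∑' n : ℕ, (chiSeq n : ℝ) / χ ^ (n + 1) = 1 := by
  have hχ0 : (0:ℝ) < χ := by linarith
  set S : ℕ → ℝ := fun N => ∑ m ∈ Finset.range N, (chiSeq m : ℝ) / χ ^ (m + 1) with hSdef
  have hc : (0:ℝ) < χ ^ 2 - χ - 1 := by nlinarith
  have hS : ∀ k, 1 - S (2 * k + 2) = (χ ^ 2 - χ - 1) / χ ^ (2 * k + 2) := by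
    intro k
    induction k with
    | zero =>
      show 1 - S 2 = _
      rw [hSdef]
      show 1 - ∑ m ∈ Finset.range 2, (chiSeq m : ℝ) / χ ^ (m + 1) = _
      rw [Finset.sum_range_succ, Finset.sum_range_succ, Finset.sum_range_zero]
      rw [show chiSeq 0 = 1 from rfl, show chiSeq 1 = 1 from rfl]
      push_cast
      field_simp
      ring
    | succ k ih =>
      have e1 : S (2 * (k + 1) + 2) = S (2 * k + 2) + 1 / χ ^ (2 * k + 3) := by
        rw [hSdef]
        show (∑ m ∈ Finset.range (2 * (k+1) + 2), (chiSeq m : ℝ) / χ ^ (m + 1))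
          = (∑ m ∈ Finset.range (2 * k + 2), (chiSeq m : ℝ) / χ ^ (m + 1)) + 1 / χ ^ (2 * k + 3)
        rw [show 2 * (k + 1) + 2 = (2 * k + 2) + 1 + 1 by ring]
        rw [Finset.sum_range_succ, Finset.sum_range_succ]
        rw [chiSeq_even' (by omega), chiSeq_odd' (by omega) (by omega)]
        push_cast
        ring
      have ihS : S (2 * k + 2) = 1 - (χ ^ 2 - χ - 1) / χ ^ (2 * k + 2) := by linarith
      rw [e1, ihS, show 2 * (k + 1) + 2 = 2 * k + 2 + 2 by ring]
      set P := χ ^ (2 * k + 2) with hP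
      have hPpos : (0:ℝ) < P := pow_pos hχ0 _
      have h3 : χ ^ (2 * k + 3) = P * χ := by rw [hP, ← pow_succ]
      have h4 : χ ^ (2 * k + 2 + 2) = P * χ ^ 2 := by rw [hP, ← pow_add]
      rw [h3, h4]
      have key : (χ ^ 2 - χ - 1) / P - 1 / (P * χ) = (χ ^ 2 - χ - 1) / (P * χ ^ 2) := by
        rw [div_sub_div _ _ (ne_of_gt hPpos) (by positivity),
          div_eq_div_iff (by positivity) (by positivity)]
        ring_nf
        linear_combination (P ^ 2 * χ) * hrel
      linarith [key]
  -- S is monotone, bounded by 1, tends to 1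
  have hmono : Monotone S := by
    apply monotone_nat_of_le_succ
    intro n
    rw [hSdef]
    show (∑ m ∈ Finset.range n, (chiSeq m : ℝ) / χ ^ (m + 1)) ≤
      ∑ m ∈ Finset.range (n + 1), (chiSeq m : ℝ) / χ ^ (m + 1)
    rw [Finset.sum_range_succ]
    have : (0:ℝ) ≤ (chiSeq n : ℝ) / χ ^ (n + 1) := by positivity
    linarith
  have hle1 : ∀ N, S N ≤ 1 := by
    intro N
    have h1' := hS N
    have : S N ≤ S (2 * N + 2) := hmono (by omega)
    have hd : 0 < (χ ^ 2 - χ - 1) / χ ^ (2 * N + 2) := by positivity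
    linarith
  have hlb : ∀ N, 1 ≤ N → 1 - 2 * χ * (1 / χ) ^ N ≤ S N := by
    intro N hN
    have hkk : 2 * ((N - 2) / 2) + 2 ≤ N + 1 ∧ N ≤ 2 * ((N - 2) / 2) + 2 + 1 := by omega
    set k := (N - 2) / 2 with hk
    have hmle : S (2 * k + 2) ≤ S (N + 1) := hmono (by omega)
    have hm2 : S N = S (N + 1) - (chiSeq N : ℝ) / χ ^ (N + 1) := by
      rw [hSdef]
      show (∑ m ∈ Finset.range N, (chiSeq m : ℝ) / χ ^ (m + 1)) =
        (∑ m ∈ Finset.range (N + 1), (chiSeq m : ℝ) / χ ^ (m + 1)) - (chiSeq N : ℝ) / χ ^ (N + 1)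
      rw [Finset.sum_range_succ]
      ring
    have hSk := hS k
    -- 1 - S N = (1 - S (N+1)) + chiSeq N / χ^(N+1) ≤ (1 - S(2k+2)) + 1/χ^(N+1)
    have hb1 : (χ ^ 2 - χ - 1) / χ ^ (2 * k + 2) ≤ χ * (1 / χ) ^ N := by
      rw [one_div, inv_pow, ← one_div, mul_one_div, div_le_div_iff₀ (by positivity) (by positivity)]
      have hNle : χ ^ N ≤ χ ^ (2 * k + 2) * χ := by
        rw [← pow_succ]
        exact pow_le_pow_right₀ (by linarith) (by omega)
      have : (χ ^ 2 - χ - 1) * χ ^ N ≤ 1 * (χ ^ (2 * k + 2) * χ) := by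
        have hcle : χ ^ 2 - χ - 1 ≤ 1 := by nlinarith
        have := pow_pos hχ0 N
        nlinarith [hNle, pow_pos hχ0 (2 * k + 2)]
      linarith
    have hb2 : (chiSeq N : ℝ) / χ ^ (N + 1) ≤ χ * (1 / χ) ^ N := by
      have : (chiSeq N : ℝ) ≤ 1 := by exact_mod_cast chiSeq_le_one' N
      rw [one_div, inv_pow, ← one_div, mul_one_div]
      calc (chiSeq N : ℝ) / χ ^ (N + 1) ≤ 1 / χ ^ (N + 1) := by gcongr
        _ ≤ χ / χ ^ N := by
            rw [div_le_div_iff₀ (by positivity) (by positivity), pow_succ]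
            nlinarith [pow_pos hχ0 N]
    nlinarith [hmle, hm2, hSk, hb1, hb2]
  -- conclude tendsto
  have htend : Filter.Tendsto S Filter.atTop (nhds 1) := by
    have h0 : Filter.Tendsto (fun N : ℕ => 1 - 2 * χ * (1 / χ) ^ N) Filter.atTop (nhds 1) := by
      have := tendsto_pow_atTop_nhds_zero_of_lt_one (by positivity : (0:ℝ) ≤ 1/χ)
        (by rw [div_lt_one hχ0]; exact h1)
      have h' := this.const_mul (2 * χ)
      have h'' := Filter.Tendsto.const_sub 1 h'
      simpa using h''
    refine tendsto_of_tendsto_of_tendsto_of_le_of_le' h0 tendsto_const_nhds ?_ ?_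
    · exact Filter.eventually_atTop.2 ⟨1, hlb⟩
    · exact Filter.Eventually.of_forall hle1
  have hnn : ∀ n, (0:ℝ) ≤ (chiSeq n : ℝ) / χ ^ (n + 1) := fun n => by positivity
  have := (hasSum_iff_tendsto_nat_of_nonneg hnn 1).2 htend
  exact this.tsum_eq
end


section
variable {χ : ℝ}

lemma chi_gt (h1 : 1 < χ) (h2 : χ < 2) (hrel : χ ^ 4 - χ ^ 3 - 2 * χ ^ 2 + 1 = 0) :
    1.88 < χ := by
  by_contra h
  push_neg at h
  nlinarith [sq_nonneg (χ - 1), sq_nonneg (χ - 1.88), mul_pos (sub_pos.2 h1) (sub_pos.2 h1),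
    mul_nonneg (sub_nonneg.2 h1.le) (sub_nonneg.2 h), sq_nonneg χ,
    mul_nonneg (mul_nonneg (sub_nonneg.2 h1.le) (sub_nonneg.2 h)) (sub_nonneg.2 h1.le)]

lemma geo_summable (h1 : 1 < χ) : Summable (fun n : ℕ => (1 / χ) ^ (n + 1)) := by
  have h0 : (0:ℝ) ≤ 1 / χ := by positivity
  have hlt : 1 / χ < 1 := by
    rw [div_lt_one (by linarith)]; exact h1
  have := (summable_geometric_of_lt_one h0 hlt).mul_left (1 / χ)
  refine this.congr fun n => ?_
  rw [pow_succ]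
  ring

lemma geo_tsum (h1 : 1 < χ) : ∑' n : ℕ, (1 / χ) ^ (n + 1) = 1 / (χ - 1) := by
  have h0 : (0:ℝ) ≤ 1 / χ := by positivity
  have hlt : 1 / χ < 1 := by rw [div_lt_one (by linarith)]; exact h1
  calc ∑' n : ℕ, (1 / χ) ^ (n + 1) = ∑' n : ℕ, (1 / χ) * (1 / χ) ^ n := by
        apply tsum_congr; intro n; rw [pow_succ]; ring
    _ = (1 / χ) * ∑' n : ℕ, (1 / χ) ^ n := tsum_mul_left
    _ = (1 / χ) * (1 - 1 / χ)⁻¹ := by rw [tsum_geometric_of_lt_one h0 hlt]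
    _ = 1 / (χ - 1) := by
        field_simp

lemma digit_summable (h1 : 1 < χ) (s : ℕ → ℕ) (hs : ∀ n, s n ≤ 1) :
    Summable (fun n : ℕ => (s n : ℝ) / χ ^ (n + 1)) := by
  have hχ : (0:ℝ) < χ := by linarith
  refine Summable.of_nonneg_of_le (fun n => by positivity) (fun n => ?_) (geo_summable h1)
  have hn1 : (s n : ℝ) ≤ 1 := by exact_mod_cast hs n
  calc (s n : ℝ) / χ ^ (n + 1) ≤ 1 / χ ^ (n + 1) := by gcongr
    _ = (1 / χ) ^ (n + 1) := by rw [div_pow, one_pow]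

lemma uniq_aux (h1 : 1 < χ) (h2 : χ < 2) (hrel : χ ^ 4 - χ ^ 3 - 2 * χ ^ 2 + 1 = 0)
    (s : ℕ → ℕ) (hd : ∀ n, s n ≤ 1) (hsum : ∑' n : ℕ, (s n : ℝ) / χ ^ (n + 1) = 1) :
    s = chiSeq := by
  have hχ0 : (0:ℝ) < χ := by linarith
  have h188 : 1.88 < χ := chi_gt h1 h2 hrel
  set t : ℕ → ℝ := fun n => ∑' m : ℕ, (s (m + n) : ℝ) / χ ^ (m + 1) with htdef
  have hsm : ∀ n, Summable (fun m : ℕ => (s (m + n) : ℝ) / χ ^ (m + 1)) :=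
    fun n => digit_summable h1 (fun m => s (m + n)) (fun m => hd _)
  have ht0 : t 0 = 1 := by
    rw [htdef]; simpa using hsum
  have hnn : ∀ n, 0 ≤ t n := fun n => tsum_nonneg (fun m => by positivity)
  have hub : ∀ n, t n ≤ 1 / (χ - 1) := by
    intro n
    rw [htdef, ← geo_tsum h1]
    refine Summable.tsum_le_tsum (fun m => ?_) (hsm n) (geo_summable h1)
    have hn1 : (s (m + n) : ℝ) ≤ 1 := by exact_mod_cast hd _
    calc (s (m + n) : ℝ) / χ ^ (m + 1) ≤ 1 / χ ^ (m + 1) := by gcongr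
      _ = (1 / χ) ^ (m + 1) := by rw [div_pow, one_pow]
  have hrec : ∀ n, t (n + 1) = χ * t n - s n := by
    intro n
    have e1 : t n = (s n : ℝ) / χ + (∑' m : ℕ, (s (m + 1 + n) : ℝ) / χ ^ (m + 1 + 1)) := by
      have := Summable.tsum_eq_zero_add (hsm n)
      simpa using this
    have e2 : (∑' m : ℕ, (s (m + 1 + n) : ℝ) / χ ^ (m + 1 + 1)) = t (n + 1) * χ⁻¹ := by
      rw [htdef, ← tsum_mul_right]
      apply tsum_congr
      intro m
      have hm : m + 1 + n = m + (n + 1) := by ring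
      rw [← hm, pow_succ, div_mul_eq_div_div, div_eq_mul_inv]
    rw [e2] at e1
    field_simp at e1
    linarith [e1]
  -- forcing lemmas
  have force1 : ∀ n, 1 / (χ * (χ - 1)) < t n → s n = 1 := by
    intro n hn
    by_contra h
    have hz : s n = 0 := by have := hd n; omega
    have := hrec n
    rw [hz] at this
    have h' : 1 < t n * (χ * (χ - 1)) := by
      rwa [div_lt_iff₀ (by nlinarith)] at hn
    have hgt : 1 / (χ - 1) < t (n + 1) := by
      rw [this]
      push_cast
      rw [div_lt_iff₀ (by linarith)]
      nlinarith [h']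
    exact absurd (hub (n + 1)) (not_le.2 hgt)
  have force0 : ∀ n, t n < 1 / χ → s n = 0 := by
    intro n hn
    by_contra h
    have hz : s n = 1 := by have := hd n; omega
    have := hrec n
    rw [hz] at this
    have hlt : t (n + 1) < 0 := by
      rw [this]
      push_cast
      rw [lt_div_iff₀ hχ0] at hn
      linarith
    exact absurd (hnn (n + 1)) (not_le.2 hlt)
  -- numeric facts
  have hB : 1 / (χ * (χ - 1)) < χ ^ 2 - χ - 1 := by
    rw [div_lt_iff₀ (by nlinarith)]
    nlinarith [sq_nonneg (χ - 1.88), sq_nonneg (χ - 2)]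
  have hB1 : χ ^ 2 - χ - 1 < χ - 1 := by nlinarith
  have hB2 : χ - 1 < 1 := by linarith
  have hC : χ ^ 3 - χ ^ 2 - χ - 1 < 1 / χ := by
    rw [lt_div_iff₀ hχ0]
    nlinarith
  -- forced digits
  have hs0 : s 0 = 1 := force1 0 (by rw [ht0]; linarith)
  have ht1 : t 1 = χ - 1 := by rw [hrec 0, ht0, hs0]; push_cast; ring
  have hs1 : s 1 = 1 := force1 1 (by rw [ht1]; linarith)
  have ht2 : t 2 = χ ^ 2 - χ - 1 := by rw [hrec 1, ht1, hs1]; push_cast; ring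
  have key : ∀ k, t (2 * k + 2) = χ ^ 2 - χ - 1 := by
    intro k
    induction k with
    | zero => simpa using ht2
    | succ k ih =>
      have hsk : s (2 * k + 2) = 1 := force1 _ (by rw [ih]; exact hB)
      have ht3 : t (2 * k + 3) = χ ^ 3 - χ ^ 2 - χ - 1 := by
        have := hrec (2 * k + 2)
        rw [ih, hsk] at this
        rw [show 2 * k + 3 = 2 * k + 2 + 1 by ring, this]
        push_cast; ring
      have hsk3 : s (2 * k + 3) = 0 := force0 _ (by rw [ht3]; exact hC)
      have := hrec (2 * k + 3)
      rw [ht3, hsk3] at this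
      rw [show 2 * (k + 1) + 2 = 2 * k + 3 + 1 by ring, this]
      push_cast
      nlinarith [hrel]
  have hseven : ∀ k, s (2 * k + 2) = 1 := fun k => force1 _ (by rw [key k]; exact hB)
  have hsodd : ∀ k, s (2 * k + 3) = 0 := by
    intro k
    apply force0
    have hsk : s (2 * k + 2) = 1 := hseven k
    have := hrec (2 * k + 2)
    rw [key k, hsk] at this
    rw [show 2 * k + 3 = 2 * k + 2 + 1 by ring, this]
    push_cast
    calc χ * (χ ^ 2 - χ - 1) - 1 = χ ^ 3 - χ ^ 2 - χ - 1 := by ring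
      _ < 1 / χ := hC
  funext n
  show s n = chiSeq n
  unfold chiSeq
  rcases Nat.lt_or_ge n 2 with hn | hn
  · interval_cases n
    · simpa using hs0
    · simpa using hs1
  · rw [if_neg (by omega)]
    rcases Nat.even_or_odd n with ⟨j, hj⟩ | ⟨j, hj⟩
    · obtain ⟨k, rfl⟩ : ∃ k, n = 2 * k + 2 := ⟨j - 1, by omega⟩
      rw [if_pos (by omega)]
      exact hseven k
    · obtain ⟨k, rfl⟩ : ∃ k, n = 2 * k + 3 := ⟨j - 1, by omega⟩
      rw [if_neg (by omega)]
      exact hsodd k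
end

/-- 11(10)^∞ is strictly self-bracketed; consequently the root χ of
x⁴ − x³ − 2x² + 1 in (1,2) is univoque. -/
theorem chiSeq_strictly_selfBracketed_and_chi_univoque :
    (∀ k, 1 ≤ k → lexLt (complSeq chiSeq) (shiftSeq chiSeq k) ∧
      lexLt (shiftSeq chiSeq k) chiSeq) ∧
    (∀ χ : ℝ, 1 < χ → χ < 2 → χ ^ 4 - χ ^ 3 - 2 * χ ^ 2 + 1 = 0 →
      ∃! s : ℕ → ℕ, (∀ n, s n ≤ 1) ∧ ∑' n : ℕ, (s n : ℝ) / χ ^ (n + 1) = 1) := by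
  refine ⟨part1, ?_⟩
  intro χ h1 h2 hrel
  refine ⟨chiSeq, ⟨chiSeq_le_one, exist_aux h1 h2 (chi_gt h1 h2 hrel) hrel⟩, ?_⟩
  intro s hs
  exact uniq_aux h1 h2 hrel s hs.1 hs.2
end

section
/- Let r ≥ 1, n ≥ r+1, and let β ∈ (1,2) satisfy (β^{r+1} − β^r − ⋯ − 1)·β^n = β^{r+1} − 1 (i.e., β is a root of P(x)x^n − A(x)). Then the binary sequence 1^{r+1}(0^{n−r−1}1^r 0)^∞ is a β-representation of 1, that is, the sum of β^{−position} over all positions at which the sequence 1^{r+1}(0^{n−r−1}1^r 0)^∞ has a 1 equals 1. -/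
/-- If β ∈ (1,2) is a root of P(x)xⁿ − A(x) with P(x) = x^{r+1} − x^r − ⋯ − 1 and
A(x) = x^{r+1} − 1, then the binary sequence 1^{r+1}(0^{n−r−1}1^r 0)^∞ represents 1:
Σ_{k=1}^{r+1} β^{−k} + Σ_{j≥0} Σ_{i=1}^{r} β^{−((j+1)n+i)} = 1. -/
theorem representation_of_regular_pisot (r n : ℕ) (hr : 1 ≤ r) (hn : r + 1 ≤ n)
    (β : ℝ) (h1 : 1 < β) (h2 : β < 2)
    (hroot : (β ^ (r + 1) - ∑ j ∈ Finset.range (r + 1), β ^ j) * β ^ n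
      = β ^ (r + 1) - 1) :
    (∑ k ∈ Finset.range (r + 1), 1 / β ^ (k + 1)) +
      ∑' j : ℕ, ∑ i ∈ Finset.range r, 1 / β ^ ((j + 1) * n + (i + 1)) = 1 := by
  have hb0 : (0:ℝ) < β := lt_trans one_pos h1
  have hbne : β ≠ 0 := ne_of_gt hb0
  have hbne1 : β ≠ 1 := ne_of_gt h1
  have hb1 : β - 1 ≠ 0 := sub_ne_zero.mpr (ne_of_gt h1)
  have hβn : 1 < β ^ n := one_lt_pow₀ h1 (by omega)
  set x : ℝ := (β ^ n)⁻¹ with hxdef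
  have hx0 : 0 ≤ x := by positivity
  have hx1 : x < 1 := by
    rw [hxdef]
    exact inv_lt_one_of_one_lt₀ hβn
  have hx1' : 1 - x ≠ 0 := sub_ne_zero.mpr (ne_of_gt hx1)
  set T : ℝ := ∑ i ∈ Finset.range r, 1 / β ^ (i + 1) with hTdef
  have hterm : ∀ j : ℕ, ∑ i ∈ Finset.range r, 1 / β ^ ((j + 1) * n + (i + 1))
      = x ^ (j + 1) * T := by
    intro j
    rw [hTdef, Finset.mul_sum]
    refine Finset.sum_congr rfl fun i _ => ?_
    rw [pow_add, mul_comm (j + 1) n, pow_mul, hxdef]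
    field_simp
    rw [← mul_pow, mul_one_div_cancel (pow_ne_zero _ hbne), one_pow]
  have htsum : (∑' j : ℕ, ∑ i ∈ Finset.range r, 1 / β ^ ((j + 1) * n + (i + 1)))
      = x * (1 - x)⁻¹ * T := by
    simp_rw [hterm, pow_succ, mul_comm (x ^ _) x, mul_assoc]
    rw [tsum_mul_left, tsum_mul_right, tsum_geometric_of_lt_one hx0 hx1]
  rw [htsum]
  have hgeo : ∀ m : ℕ, ∑ k ∈ Finset.range m, 1 / β ^ (k + 1)
      = (β ^ m - 1) / ((β - 1) * β ^ m) := by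
    intro m
    induction m with
    | zero => simp
    | succ m ih =>
      have hpm : β ^ m ≠ 0 := pow_ne_zero _ hbne
      rw [Finset.sum_range_succ, ih]
      field_simp
      ring
  rw [hgeo (r + 1)]
  have hTval : T = (β ^ r - 1) / ((β - 1) * β ^ r) := by rw [hTdef, hgeo r]
  rw [hTval]
  have hsum : ∑ j ∈ Finset.range (r + 1), β ^ j = (β ^ (r + 1) - 1) / (β - 1) :=
    geom_sum_eq hbne1 (r + 1)
  rw [hsum] at hroot
  have hpr : β ^ r ≠ 0 := pow_ne_zero _ hbne
  have hpr1 : β ^ (r + 1) ≠ 0 := pow_ne_zero _ hbne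
  have hpn : β ^ n ≠ 0 := pow_ne_zero _ hbne
  have hxval : x = (β ^ n)⁻¹ := hxdef
  rw [hxval]
  have hn1 : β ^ n - 1 ≠ 0 := sub_ne_zero.mpr (ne_of_gt hβn)
  have hgx : x * (1 - x)⁻¹ = (β ^ n - 1)⁻¹ := by
    rw [hxdef]
    rw [inv_eq_iff_eq_inv.symm]
    field_simp
  have hroot2 : (β ^ (r + 1) * (β - 1) - (β ^ (r + 1) - 1)) * β ^ n
      = (β ^ (r + 1) - 1) * (β - 1) := by
    have h := hroot
    field_simp at h
    linear_combination h
  rw [hgx]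
  field_simp
  linear_combination (-β ^ r) * hroot2
end

section
/- For r ≥ 1 and r+1 ≤ n < 2(r+1), the polynomial (x^{r+1} − x^r − ⋯ − x − 1)x^n − (x^{r+1} − 1) has a root in the open interval (ψ_r, 2), where ψ_r is the root in (1,2) of x^{r+1} − x^r − ⋯ − 1. In particular, evaluating at x = 1 gives a negative value and at x = 2 gives 2^n − 2^{r+1} + 1 > 0. -/
/-- For r ≥ 1 and r+1 ≤ n < 2(r+1), the polynomial P(x)xⁿ − A(x), with
P(x) = x^{r+1} − x^r − ⋯ − 1 and A(x) = x^{r+1} − 1, is negative at 1, equals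
2ⁿ − 2^{r+1} + 1 > 0 at 2, and has a root in (ψ_r, 2). -/
theorem regular_pisot_root_location (r n : ℕ) (hr : 1 ≤ r)
    (hn1 : r + 1 ≤ n) (hn2 : n < 2 * (r + 1))
    (ψ : ℝ) (hψ1 : 1 < ψ) (hψ2 : ψ < 2)
    (hψroot : ψ ^ (r + 1) - ∑ j ∈ Finset.range (r + 1), ψ ^ j = 0) :
    (((1 : ℝ) ^ (r + 1) - ∑ j ∈ Finset.range (r + 1), (1 : ℝ) ^ j) * 1 ^ n
        - ((1 : ℝ) ^ (r + 1) - 1) < 0) ∧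
    (((2 : ℝ) ^ (r + 1) - ∑ j ∈ Finset.range (r + 1), (2 : ℝ) ^ j) * 2 ^ n
        - ((2 : ℝ) ^ (r + 1) - 1) = 2 ^ n - 2 ^ (r + 1) + 1) ∧
    ((0 : ℝ) < 2 ^ n - 2 ^ (r + 1) + 1) ∧
    (∃ β : ℝ, ψ < β ∧ β < 2 ∧
      (β ^ (r + 1) - ∑ j ∈ Finset.range (r + 1), β ^ j) * β ^ n
        - (β ^ (r + 1) - 1) = 0) := by
  have hsum2 : ∑ j ∈ Finset.range (r + 1), (2 : ℝ) ^ j = 2 ^ (r + 1) - 1 := by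
    have := geom_sum_eq (by norm_num : (2 : ℝ) ≠ 1) (r + 1)
    rw [this]; norm_num
  have h2pow : (2 : ℝ) ^ (r + 1) ≤ 2 ^ n := pow_le_pow_right₀ one_le_two hn1
  refine ⟨?_, ?_, ?_, ?_⟩
  · simp only [one_pow, Finset.sum_const, Finset.card_range, nsmul_eq_mul, mul_one]
    push_cast
    nlinarith [Nat.one_le_cast (α := ℝ) |>.mpr hr]
  · rw [hsum2]; ring
  · linarith
  · set f : ℝ → ℝ := fun x =>
      (x ^ (r + 1) - ∑ j ∈ Finset.range (r + 1), x ^ j) * x ^ n - (x ^ (r + 1) - 1)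
      with hf
    have hcont : ContinuousOn f (Set.Icc ψ 2) := by
      apply Continuous.continuousOn
      fun_prop
    have hfψ : f ψ < 0 := by
      have h1 : (1 : ℝ) < ψ ^ (r + 1) := one_lt_pow₀ hψ1 (by omega)
      simp only [hf, hψroot, zero_mul, zero_sub]
      linarith
    have hf2 : 0 < f 2 := by
      simp only [hf, hsum2]
      nlinarith
    have hmem : (0 : ℝ) ∈ Set.Ioo (f ψ) (f 2) := ⟨hfψ, hf2⟩
    obtain ⟨β, hβmem, hβ0⟩ := intermediate_value_Ioo (le_of_lt hψ2) hcont hmem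
    exact ⟨β, hβmem.1, hβmem.2, hβ0⟩
end
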